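/- Let (X, m_s) be a complete M_s-metric space and T : X → X a self mapping such that m_s(Tx, Tx, Ty) ≤ k·m_s(x,x,y) for all x, y ∈ X, where k ∈ [0,1). Then T has a unique fixed point u ∈ X, and moreover m_s(u,u,u) = 0. -/

import Mathlib

/-!
The Picard iterates `xₙ = Tⁿ x₀` satisfy `m(xₙ, xₙ, xₙ₊₁) ≤ kⁿ m(x₀, x₀, x₁)` and
`m(xₙ, xₙ, xₙ) ≤ kⁿ m(x₀, x₀, x₀)`. Axiom (4) with `x = y` is a weak triangle inequality
`d(x, z) ≤ 2 d(x, y) + d(y, z)` for `d(x, y) = m(x, x, y) − m_{s,x,x,y}` (`msdist m x y`),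
so summing the geometric series shows the iterates are `Mₛ`-Cauchy. At their limit `a` the
self-distances force `m(a, a, a) = 0`, after which `d(Ta, a) ≤ 2k d(xₙ, a) + d(xₙ₊₁, a) → 0`
makes `a` a fixed point.
Any fixed point `v` has `m(v, v, v) ≤ k m(v, v, v)` and `m(v, v, a) ≤ k m(v, v, a)`, whence
uniqueness.
-/

open Filter Topology

/-- `msmin m x y z = min {m(x,x,x), m(y,y,y), m(z,z,z)}`. -/
def msmin {X : Type*} (m : X → X → X → ℝ) (x y z : X) : ℝ :=
  min (m x x x) (min (m y y y) (m z z z))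

/-- `msmax m x y z = max {m(x,x,x), m(y,y,y), m(z,z,z)}`. -/
def msmax {X : Type*} (m : X → X → X → ℝ) (x y z : X) : ℝ :=
  max (m x x x) (max (m y y y) (m z z z))

/-- `m` is an `Mₛ`-metric on `X`. -/
structure IsMsMetric {X : Type*} (m : X → X → X → ℝ) : Prop where
  nonneg : ∀ x y z, 0 ≤ m x y z
  eq_iff : ∀ x y, (m x x x = m y y y ∧ m y y y = m x x y) ↔ x = y
  min_le : ∀ x y z, msmin m x y z ≤ m x y z
  symm : ∀ x y, m x x y = m y y x
  ineq : ∀ x y z t, m x y z - msmin m x y z ≤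
    (m x x t - msmin m x x t) + (m y y t - msmin m y y t) + (m z z t - msmin m z z t)

/-- A sequence `x` converges to `a` in the `Mₛ`-metric sense. -/
def MsConvergesTo {X : Type*} (m : X → X → X → ℝ) (x : ℕ → X) (a : X) : Prop :=
  Tendsto (fun n => m (x n) (x n) a - msmin m (x n) (x n) a) atTop (nhds 0)

/-- A sequence `x` is `Mₛ`-Cauchy: the two double limits exist (and are finite). -/
def MsCauchy {X : Type*} (m : X → X → X → ℝ) (x : ℕ → X) : Prop :=
  (∃ L : ℝ, Tendsto
      (fun p : ℕ × ℕ => m (x p.1) (x p.1) (x p.2) - msmin m (x p.1) (x p.1) (x p.2))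
      atTop (nhds L)) ∧
  (∃ L : ℝ, Tendsto
      (fun p : ℕ × ℕ => msmax m (x p.1) (x p.1) (x p.2) - msmin m (x p.1) (x p.1) (x p.2))
      atTop (nhds L))

/-- The `Mₛ`-metric space `(X, m)` is complete. -/
def MsComplete {X : Type*} (m : X → X → X → ℝ) : Prop :=
  ∀ x : ℕ → X, MsCauchy m x → ∃ a : X,
    Tendsto (fun n => m (x n) (x n) a - msmin m (x n) (x n) a) atTop (nhds 0) ∧
    Tendsto (fun n => msmax m (x n) (x n) a - msmin m (x n) (x n) a) atTop (nhds 0)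


section

variable {X : Type*} {m : X → X → X → ℝ}

def msdist (m : X → X → X → ℝ) (x y : X) : ℝ :=
  m x x y - msmin m x x y

lemma msmin_comm (x y : X) : msmin m x x y = msmin m y y x := by
  simp only [msmin, ← min_assoc, min_self]
  exact min_comm _ _

lemma msmin_le_msmax (x y z : X) : msmin m x y z ≤ msmax m x y z :=
  (min_le_left _ _).trans (le_max_left _ _)

namespace IsMsMetric

lemma msmin_nonneg (hm : IsMsMetric m) (x y z : X) : 0 ≤ msmin m x y z :=
  le_min (hm.nonneg _ _ _) (le_min (hm.nonneg _ _ _) (hm.nonneg _ _ _))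

lemma msmin_eq_zero_of_self_eq_zero (hm : IsMsMetric m) {y : X} (hy : m y y y = 0) (x : X) :
    msmin m x x y = 0 :=
  le_antisymm (hy ▸ (min_le_right _ _).trans (min_le_right _ _)) (hm.msmin_nonneg x x y)

lemma msdist_nonneg (hm : IsMsMetric m) (x y : X) : 0 ≤ msdist m x y :=
  sub_nonneg.2 (hm.min_le x x y)

lemma msdist_le (hm : IsMsMetric m) (x y : X) : msdist m x y ≤ m x x y :=
  sub_le_self _ (hm.msmin_nonneg x x y)

lemma msdist_symm (hm : IsMsMetric m) (x y : X) : msdist m x y = msdist m y x := by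
  rw [msdist, msdist, hm.symm, msmin_comm]

lemma msdist_triangle (hm : IsMsMetric m) (x y z : X) :
    msdist m x z ≤ 2 * msdist m x y + msdist m y z := by
  have h := hm.ineq x x z y
  rw [hm.symm z y, msmin_comm z y] at h
  simp only [msdist]
  linarith

lemma msmax_sub_msmin_le (hm : IsMsMetric m) (x y : X) :
    msmax m x x y - msmin m x x y ≤ m x x x + m y y y := by
  have hx := hm.nonneg x x x
  have hy := hm.nonneg y y y
  have hmax : msmax m x x y ≤ m x x x + m y y y :=
    max_le (by linarith) (max_le (by linarith) (by linarith))
  linarith [hm.msmin_nonneg x x y]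

lemma eq_of_self_eq_zero (hm : IsMsMetric m) {x y : X} (hx : m x x x = 0) (hy : m y y y = 0)
    (hxy : m x x y = 0) : x = y :=
  (hm.eq_iff x y).1 ⟨hx.trans hy.symm, hy.trans hxy.symm⟩

lemma msdist_add_le_of_geometric (hm : IsMsMetric m) {u : ℕ → X} {C k : ℝ} (hk0 : 0 ≤ k)
    (hk1 : k < 1) (hu : ∀ n, msdist m (u n) (u (n + 1)) ≤ C * k ^ n) (p j : ℕ) :
    msdist m (u p) (u (p + j)) ≤ 2 * C * k ^ p / (1 - k) := by
  have hC : 0 ≤ C := by simpa using (hm.msdist_nonneg _ _).trans (hu 0)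
  have h1k : 0 < 1 - k := sub_pos.2 hk1
  induction j generalizing p with
  | zero =>
    have hzero : msdist m (u p) (u p) = 0 := by simp [msdist, msmin]
    rw [add_zero, hzero]
    positivity
  | succ j ih =>
    have hstep := hm.msdist_triangle (u p) (u (p + 1)) (u (p + (j + 1)))
    have htail := ih (p + 1)
    rw [add_right_comm, add_assoc] at htail
    calc msdist m (u p) (u (p + (j + 1)))
        ≤ 2 * (C * k ^ p) + 2 * C * k ^ (p + 1) / (1 - k) := by linarith [hu p]
      _ = 2 * C * k ^ p / (1 - k) := by field_simp; ring

lemma msdist_le_of_geometric (hm : IsMsMetric m) {u : ℕ → X} {C k : ℝ} (hk0 : 0 ≤ k)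
    (hk1 : k < 1) (hu : ∀ n, msdist m (u n) (u (n + 1)) ≤ C * k ^ n) (p q : ℕ) :
    msdist m (u p) (u q) ≤ 2 * C * (k ^ p + k ^ q) / (1 - k) := by
  have hC : 0 ≤ C := by simpa using (hm.msdist_nonneg _ _).trans (hu 0)
  have h1k : 0 < 1 - k := sub_pos.2 hk1
  rcases le_total p q with hpq | hqp
  · obtain ⟨j, rfl⟩ := Nat.exists_eq_add_of_le hpq
    refine (hm.msdist_add_le_of_geometric hk0 hk1 hu p j).trans ?_
    gcongr
    exact le_add_of_nonneg_right (by positivity)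
  · obtain ⟨j, rfl⟩ := Nat.exists_eq_add_of_le hqp
    rw [hm.msdist_symm]
    refine (hm.msdist_add_le_of_geometric hk0 hk1 hu q j).trans ?_
    gcongr
    exact le_add_of_nonneg_left (by positivity)

lemma msCauchy_of_geometric (hm : IsMsMetric m) {u : ℕ → X} {C k : ℝ} (hk0 : 0 ≤ k)
    (hk1 : k < 1) (hu : ∀ n, msdist m (u n) (u (n + 1)) ≤ C * k ^ n)
    (hself : Tendsto (fun n => m (u n) (u n) (u n)) atTop (𝓝 0)) : MsCauchy m u := by
  rw [MsCauchy, ← prod_atTop_atTop_eq]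
  have hfst : Tendsto (fun p : ℕ × ℕ => k ^ p.1) (atTop ×ˢ atTop) (𝓝 0) :=
    (tendsto_pow_atTop_nhds_zero_of_lt_one hk0 hk1).comp tendsto_fst
  have hsnd : Tendsto (fun p : ℕ × ℕ => k ^ p.2) (atTop ×ˢ atTop) (𝓝 0) :=
    (tendsto_pow_atTop_nhds_zero_of_lt_one hk0 hk1).comp tendsto_snd
  refine ⟨⟨0, ?_⟩, ⟨0, ?_⟩⟩
  · refine squeeze_zero (fun p => hm.msdist_nonneg _ _)
      (fun p => hm.msdist_le_of_geometric hk0 hk1 hu p.1 p.2) ?_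
    simpa using ((hfst.add hsnd).const_mul (2 * C)).div_const (1 - k)
  · refine squeeze_zero (fun p => sub_nonneg.2 (msmin_le_msmax _ _ _))
      (fun p => hm.msmax_sub_msmin_le (u p.1) (u p.2)) ?_
    simpa using (hself.comp tendsto_fst).add (hself.comp tendsto_snd)

lemma self_eq_zero_of_tendsto (hm : IsMsMetric m) {u : ℕ → X} {a : X}
    (hself : Tendsto (fun n => m (u n) (u n) (u n)) atTop (𝓝 0))
    (ha : Tendsto (fun n => msmax m (u n) (u n) a - msmin m (u n) (u n) a) atTop (𝓝 0)) :
    m a a a = 0 := by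
  have hle : ∀ n, m a a a - m (u n) (u n) (u n) ≤
      msmax m (u n) (u n) a - msmin m (u n) (u n) a := fun n => by
    have hmax : m a a a ≤ msmax m (u n) (u n) a := (le_max_right _ _).trans (le_max_right _ _)
    have hmin : msmin m (u n) (u n) a ≤ m (u n) (u n) (u n) := min_le_left _ _
    linarith
  have h := le_of_tendsto_of_tendsto' (tendsto_const_nhds.sub hself) ha hle
  linarith [hm.nonneg a a a]

end IsMsMetric

section Contraction

variable {T : X → X} {k : ℝ}

lemma iterate_le_pow_mul (hT : ∀ x y, m (T x) (T x) (T y) ≤ k * m x x y) (hk0 : 0 ≤ k)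
    (n : ℕ) (x y : X) : m (T^[n] x) (T^[n] x) (T^[n] y) ≤ k ^ n * m x x y := by
  induction n with
  | zero => simp
  | succ n ih =>
    rw [Function.iterate_succ_apply', Function.iterate_succ_apply', pow_succ', mul_assoc]
    exact (hT _ _).trans (mul_le_mul_of_nonneg_left ih hk0)

lemma self_eq_zero_of_isFixedPt (hm : IsMsMetric m)
    (hT : ∀ x y, m (T x) (T x) (T y) ≤ k * m x x y) (hk1 : k < 1) {v : X}
    (hv : Function.IsFixedPt T v) : m v v v = 0 := by
  have h := hT v v
  rw [hv] at h
  nlinarith [hm.nonneg v v v]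

lemma eq_of_isFixedPt (hm : IsMsMetric m) (hT : ∀ x y, m (T x) (T x) (T y) ≤ k * m x x y)
    (hk1 : k < 1) {v w : X} (hv : Function.IsFixedPt T v) (hw : Function.IsFixedPt T w) :
    v = w := by
  have h := hT v w
  rw [hv, hw] at h
  have hvw : m v v w = 0 := by nlinarith [hm.nonneg v v w]
  exact hm.eq_of_self_eq_zero (self_eq_zero_of_isFixedPt hm hT hk1 hv)
    (self_eq_zero_of_isFixedPt hm hT hk1 hw) hvw

lemma isFixedPt_of_msConvergesTo (hm : IsMsMetric m)
    (hT : ∀ x y, m (T x) (T x) (T y) ≤ k * m x x y) {u : ℕ → X} {a : X}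
    (hu : ∀ n, u (n + 1) = T (u n)) (ha : m a a a = 0) (hconv : MsConvergesTo m u a) :
    Function.IsFixedPt T a := by
  have hTa : m (T a) (T a) (T a) = 0 :=
    le_antisymm (by simpa [ha] using hT a a) (hm.nonneg _ _ _)
  have hmin : ∀ x, msmin m x x a = 0 := hm.msmin_eq_zero_of_self_eq_zero ha
  have hconv' : Tendsto (fun n => m (u n) (u n) a) atTop (𝓝 0) :=
    hconv.congr fun n => by rw [hmin, sub_zero]
  have hbound : ∀ n, msdist m (T a) a ≤ 2 * (k * m (u n) (u n) a) + msdist m (u (n + 1)) a :=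
    fun n => calc
      msdist m (T a) a ≤ 2 * msdist m (T a) (u (n + 1)) + msdist m (u (n + 1)) a :=
        hm.msdist_triangle _ _ _
      _ ≤ 2 * (k * m (u n) (u n) a) + msdist m (u (n + 1)) a := by
        gcongr
        rw [hu n, ← hm.symm a (u n)]
        exact (hm.msdist_le _ _).trans (hT a (u n))
  have hlim : Tendsto (fun n => 2 * (k * m (u n) (u n) a) + msdist m (u (n + 1)) a)
      atTop (𝓝 0) := by
    simpa [msdist] using
      ((hconv'.const_mul k).const_mul 2).add (hconv.comp (tendsto_add_atTop_nat 1))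
  have hdist : msdist m (T a) a = 0 :=
    le_antisymm (ge_of_tendsto' hlim hbound) (hm.msdist_nonneg _ _)
  rw [msdist, hmin, sub_zero] at hdist
  exact hm.eq_of_self_eq_zero hTa ha hdist

end Contraction

end

/-- Theorem 1 (Banach-type contraction in a complete Mₛ-metric space). -/
theorem fixedPoint_of_contraction {X : Type*} [Nonempty X] (m : X → X → X → ℝ)
    (hm : IsMsMetric m) (hcomp : MsComplete m) (T : X → X) (k : ℝ)
    (hk0 : 0 ≤ k) (hk1 : k < 1)
    (hT : ∀ x y, m (T x) (T x) (T y) ≤ k * m x x y) :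
    ∃ u : X, T u = u ∧ m u u u = 0 ∧ ∀ v : X, T v = v → v = u := by
  obtain ⟨x₀⟩ := ‹Nonempty X›
  have hself : Tendsto (fun n => m (T^[n] x₀) (T^[n] x₀) (T^[n] x₀)) atTop (𝓝 0) :=
    squeeze_zero (fun n => hm.nonneg _ _ _) (fun n => iterate_le_pow_mul hT hk0 n x₀ x₀)
      (by simpa using (tendsto_pow_atTop_nhds_zero_of_lt_one hk0 hk1).mul_const (m x₀ x₀ x₀))
  have hstep : ∀ n, msdist m (T^[n] x₀) (T^[n + 1] x₀) ≤ m x₀ x₀ (T x₀) * k ^ n := fun n => by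
    rw [Function.iterate_succ_apply, mul_comm]
    exact (hm.msdist_le _ _).trans (iterate_le_pow_mul hT hk0 n _ _)
  obtain ⟨a, hconv, hmax⟩ := hcomp _ (hm.msCauchy_of_geometric hk0 hk1 hstep hself)
  have ha : m a a a = 0 := hm.self_eq_zero_of_tendsto hself hmax
  have hfix : T a = a :=
    isFixedPt_of_msConvergesTo hm hT (fun n => Function.iterate_succ_apply' T n x₀) ha hconv
  exact ⟨a, hfix, ha, fun v hv => eq_of_isFixedPt hm hT hk1 hv hfix⟩
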